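/- In the VPG construction setup: let u, v ∈ V(T) be such that u is an internal vertex and v is a leaf. Then (a) l_y(v) ∉ [l_y(u), r_y(u)]; and (b) l_x(v) ∈ [l_x(u), r_x(u)] if and only if u is an ancestor of v. -/

import Mathlib

open SimpleGraph Set Function

/-- `u` is an ancestor of `v` with respect to root `r`:
`u` lies on the unique path in `T` from `r` to `v`. -/
def IsAncestor {V : Type*} (T : SimpleGraph V) (r u v : V) : Prop :=
  ∀ p : T.Walk r v, p.IsPath → u ∈ p.support

/-- `u` is the parent of `v` with respect to root `r`. -/
def IsParent {V : Type*} (T : SimpleGraph V) (r u v : V) : Prop :=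
  IsAncestor T r u v ∧ u ≠ v ∧ T.Adj u v

/-- `L^r(u)`: the set of leaves of `T` that are descendants of `u`. -/
def LeafSet {V : Type*} (T : SimpleGraph V) [Fintype V] [DecidableRel T.Adj] (r u : V) :
    Set V :=
  {c | T.degree c = 1 ∧ IsAncestor T r u c}

/-- The leaf `c_{j mod k}` index. -/
def cidx {k : ℕ} (hk : 0 < k) (j : ℕ) : Fin k := ⟨j % k, Nat.mod_lt _ hk⟩

/-- A set `A` of leaves is cyclically consecutive with respect to the enumeration `c`. -/
def CycConsec {V : Type*} {k : ℕ} (hk : 0 < k) (c : Fin k → V) (A : Set V) : Prop :=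
  ∃ j m : ℕ, A = {x | ∃ t ≤ m, x = c (cidx hk (j + t))}

/-!
The `y`-coordinates separate the two kinds of vertices: every leaf has `l_y ≤ 1`, while an
internal vertex `u` has a child, so `h^{r'}(u) + 1 ≤ h` and `l_y(u) ≥ 2`.

For the `x`-coordinates, `l_x(b_j) = j` for `j ≥ 2`, while `l_x(b_0), l_x(b_1) < 2`; in particular
`l_x` is injective on leaves. Below `u = r'` lie all leaves, and both sides of (b) hold. Otherwise,
if the consecutive block of leaves below `u` starts at an index `≥ 2`, then `[l_x(u), r_x(u)]` is
exactly the real interval spanned by that block; if it starts at `b_0` or `b_1`, then `u` lies on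
the path from that leaf to `r'`, so the block is a single leaf and `[l_x(u), r_x(u)]` a point.
-/

namespace SimpleGraph

lemma IsTree.exists_adj_dist_eq_add_one {V : Type*} {G : SimpleGraph V} (hG : G.IsTree) (r : V)
    {u : V} [Fintype (G.neighborSet u)] (hu : 2 ≤ G.degree u) :
    ∃ w, G.Adj u w ∧ G.dist r w = G.dist r u + 1 := by
  obtain ⟨p, hp, hplen⟩ := hG.connected.exists_path_of_dist r u
  have hcloser : ∀ w, G.Adj u w → G.dist r u = G.dist r w + 1 → w = p.penultimate := by
    intro w hadj hw
    obtain ⟨q, hq, hqlen⟩ := hG.connected.exists_path_of_dist r w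
    have hu_q : u ∉ q.support := fun hu_q => by
      have := congrArg Walk.length (hG.isAcyclic.path_concat hp hq hadj hu_q)
      rw [Walk.length_concat] at this
      omega
    exact hG.isAcyclic.eq_penultimate_of_adj_end hp hadj
      (hG.isAcyclic.mem_support_of_ne_mem_support_of_adj_of_isPath hp hq hadj hu_q)
  obtain ⟨w, hw, hwne⟩ :=
    Finset.exists_mem_ne (by rwa [G.card_neighborFinset_eq_degree u]) p.penultimate
  rw [mem_neighborFinset] at hw
  exact ⟨w, hw, (hG.dist_eq_dist_add_one_of_adj r hw).resolve_left (hwne ∘ hcloser w hw)⟩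

end SimpleGraph

lemma IsAncestor.mem_support_of_isPath {V : Type*} {T : SimpleGraph V} {r u v : V}
    (h : IsAncestor T r u v) {p : T.Walk v r} (hp : p.IsPath) : u ∈ p.support := by
  simpa using h p.reverse hp.reverse

lemma leafSet_subsingleton_of_mem {V : Type*} [Fintype V] {T : SimpleGraph V}
    [DecidableRel T.Adj] (hT : T.Connected) {r u c : V}
    (hpath : ∀ p : T.Walk c r, p.IsPath → ∀ w ∈ p.support, w ≠ c → w ≠ r →
      ∃ z : V, LeafSet T r w = {z})
    (hu : 2 ≤ T.degree u) (hur : u ≠ r) (hc : c ∈ LeafSet T r u) :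
    (LeafSet T r u).Subsingleton := by
  obtain ⟨p, hp⟩ := (hT c r).exists_isPath
  have huc : u ≠ c := by
    rintro rfl
    exact absurd hc.1 (by omega)
  obtain ⟨z, hz⟩ := hpath p hp u (hc.2.mem_support_of_isPath hp) huc hur
  exact hz ▸ subsingleton_singleton

/-- The abscissa `l_x(b_j)` of the leaf `b_j`. -/
noncomputable def leafX (j : ℕ) : ℝ :=
  if j = 0 then 1.5 else if j = 1 then 1 else j

lemma leafX_of_two_le {j : ℕ} (hj : 2 ≤ j) : leafX j = j := by
  rw [leafX, if_neg (by omega), if_neg (by omega)]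

lemma leafX_lt_two_of_lt_two {j : ℕ} (hj : j < 2) : leafX j < 2 := by
  interval_cases j <;> norm_num [leafX]

lemma leafX_injective : Injective leafX := by
  have key : ∀ {i j : ℕ}, i < 2 → 2 ≤ j → leafX i ≠ leafX j := fun hi hj he => by
    have := leafX_lt_two_of_lt_two hi
    rw [he, leafX_of_two_le hj] at this
    exact absurd this (not_lt.2 (by exact_mod_cast hj))
  intro i j he
  rcases lt_or_ge i 2 with hi | hi <;> rcases lt_or_ge j 2 with hj | hj
  · interval_cases i <;> interval_cases j <;> first | rfl | norm_num [leafX] at he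
  · exact absurd he (key hi hj)
  · exact absurd he.symm (key hj hi)
  · rw [leafX_of_two_le hi, leafX_of_two_le hj] at he
    exact_mod_cast he

lemma leafX_mem_Icc_iff {k : ℕ} {s t : Fin k} (i : Fin k) (hst : s ≤ t)
    (hs : 2 ≤ (s : ℕ) ∨ s = t) :
    leafX i ∈ Icc (sInf ((fun j : Fin k => leafX j) '' Icc s t))
      (sSup ((fun j : Fin k => leafX j) '' Icc s t)) ↔ i ∈ Icc s t := by
  rcases hs with hs | rfl
  · have hval : ∀ j ∈ Icc s t, leafX j = (j : ℕ) := fun j hj =>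
      leafX_of_two_le (hs.trans (Fin.le_def.1 hj.1))
    have hInf : IsLeast ((fun j : Fin k => leafX j) '' Icc s t) (s : ℕ) :=
      ⟨⟨s, ⟨le_rfl, hst⟩, hval s ⟨le_rfl, hst⟩⟩, by
        rintro _ ⟨j, hj, rfl⟩
        dsimp only
        rw [hval j hj]
        exact_mod_cast hj.1⟩
    have hSup : IsGreatest ((fun j : Fin k => leafX j) '' Icc s t) (t : ℕ) :=
      ⟨⟨t, ⟨hst, le_rfl⟩, hval t ⟨hst, le_rfl⟩⟩, by
        rintro _ ⟨j, hj, rfl⟩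
        dsimp only
        rw [hval j hj]
        exact_mod_cast hj.2⟩
    rw [hInf.csInf_eq, hSup.csSup_eq, mem_Icc, mem_Icc, Fin.le_def, Fin.le_def]
    rcases lt_or_ge (i : ℕ) 2 with hi | hi
    · have hxi := leafX_lt_two_of_lt_two hi
      have hs' : (2 : ℝ) ≤ (s : ℕ) := by exact_mod_cast hs
      exact iff_of_false (fun h => by linarith [h.1]) (fun h => by omega)
    · rw [leafX_of_two_le hi]
      exact_mod_cast Iff.rfl
  · simp [leafX_injective.eq_iff, le_antisymm_iff]

lemma leafX_mem_Icc_csInf_csSup_image_iff {V : Type*} {k : ℕ} {b : Fin k → V}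
    (hb : Injective b) {lx : V → ℝ} (hlx : ∀ j, lx (b j) = leafX j) {S : Set V} {s t : Fin k}
    (hst : s ≤ t) (hs : 2 ≤ (s : ℕ) ∨ s = t)
    (hS : S = {x | ∃ j : Fin k, s ≤ j ∧ j ≤ t ∧ x = b j}) (i : Fin k) :
    lx (b i) ∈ Icc (sInf (lx '' S)) (sSup (lx '' S)) ↔ b i ∈ S := by
  have himage : lx '' S = (fun j : Fin k => leafX j) '' Icc s t := by
    ext x
    simp [hS, hlx]
  rw [himage, hlx, leafX_mem_Icc_iff i hst hs]
  simp [hS, hb.eq_iff]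

lemma forall_fin_of_cases {k : ℕ} (hk : 3 ≤ k) {P : Fin k → Prop}
    (h0 : P ⟨0, Nat.lt_of_succ_lt (Nat.lt_of_succ_lt hk)⟩) (h1 : P ⟨1, Nat.lt_of_succ_lt hk⟩)
    (hlast : P ⟨k - 1, Nat.sub_one_lt_of_lt hk⟩)
    (hmid : ∀ i : Fin k, 2 ≤ (i : ℕ) → (i : ℕ) ≤ k - 2 → P i) (i : Fin k) : P i := by
  obtain ⟨i, hi⟩ := i
  obtain rfl | rfl | rfl | ⟨hi2, hik⟩ : i = 0 ∨ i = 1 ∨ i = k - 1 ∨ (2 ≤ i ∧ i ≤ k - 2) := by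
    omega
  · exact h0
  · exact h1
  · exact hlast
  · exact hmid _ hi2 hik

/-- properties of the L-shapes of an internal vertex and a leaf. -/
theorem stmt8
    {V : Type*} [Fintype V] (T : SimpleGraph V) [DecidableRel T.Adj]
    (hT : T.IsTree) {k : ℕ} (hk : 3 ≤ k) (b : Fin k → V)
    (hinj : Function.Injective b)
    (hleaf : ∀ v : V, T.degree v = 1 ↔ ∃ i : Fin k, v = b i)
    (r' : V)
    (hconsec : ∀ u : V, 2 ≤ T.degree u → ∃ s t : Fin k, s ≤ t ∧
        LeafSet T r' u = {x | ∃ j : Fin k, s ≤ j ∧ j ≤ t ∧ x = b j})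
    (hpath0 : ∀ p : T.Walk (b ⟨0, by omega⟩) r', p.IsPath →
        ∀ w ∈ p.support, w ≠ b ⟨0, by omega⟩ → w ≠ r' → ∃ z : V, LeafSet T r' w = {z})
    (hpath1 : ∀ p : T.Walk (b ⟨1, by omega⟩) r', p.IsPath →
        ∀ w ∈ p.support, w ≠ b ⟨1, by omega⟩ → w ≠ r' → ∃ z : V, LeafSet T r' w = {z})
    (h : ℕ) (hmax : IsGreatest (Set.range fun u : V => T.dist r' u) h)
    (lx rx ly ry : V → ℝ)
    (hb0 : lx (b ⟨0, by omega⟩) = 1.5 ∧ rx (b ⟨0, by omega⟩) = (k : ℝ) - 1 ∧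
      ly (b ⟨0, by omega⟩) = 0 ∧
      ry (b ⟨0, by omega⟩) = (h : ℝ) - (T.dist r' (b ⟨0, by omega⟩) : ℝ) + 2)
    (hb1 : lx (b ⟨1, by omega⟩) = 1 ∧ rx (b ⟨1, by omega⟩) = 2 ∧
      ly (b ⟨1, by omega⟩) = 1 ∧
      ry (b ⟨1, by omega⟩) = (h : ℝ) - (T.dist r' (b ⟨1, by omega⟩) : ℝ) + 2)
    (hbk : lx (b ⟨k - 1, by omega⟩) = (k : ℝ) - 1 ∧ rx (b ⟨k - 1, by omega⟩) = (k : ℝ) ∧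
      ly (b ⟨k - 1, by omega⟩) = 0 ∧
      ry (b ⟨k - 1, by omega⟩) = (h : ℝ) - (T.dist r' (b ⟨k - 1, by omega⟩) : ℝ) + 2)
    (hbi : ∀ i : Fin k, 2 ≤ (i : ℕ) → (i : ℕ) ≤ k - 2 →
      lx (b i) = ((i : ℕ) : ℝ) ∧ rx (b i) = ((i : ℕ) : ℝ) + 1 ∧ ly (b i) = 1 ∧
      ry (b i) = (h : ℝ) - (T.dist r' (b i) : ℝ) + 2)
    (hintv : ∀ v : V, 2 ≤ T.degree v →
      lx v = sInf (lx '' LeafSet T r' v) ∧ rx v = sSup (lx '' LeafSet T r' v) ∧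
      ly v = (h : ℝ) - (T.dist r' v : ℝ) + 1 ∧ ry v = (h : ℝ) - (T.dist r' v : ℝ) + 2)
    :
    ∀ u v : V, 2 ≤ T.degree u → T.degree v = 1 →
      (ly v ∉ Set.Icc (ly u) (ry u)) ∧
      (lx v ∈ Set.Icc (lx u) (rx u) ↔ IsAncestor T r' u v) := by
  intro u v hu hv
  obtain ⟨i, rfl⟩ := (hleaf v).1 hv
  have hleafCoord : ∀ j : Fin k, lx (b j) = leafX j ∧ ly (b j) ≤ 1 :=
    forall_fin_of_cases hk (by norm_num [hb0, leafX]) (by norm_num [hb1, leafX])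
      (by
        rw [hbk.1, hbk.2.2.1, leafX_of_two_le (by simp; omega)]
        norm_num [Nat.cast_sub (by omega : 1 ≤ k)])
      (fun j hj2 hjk =>
        ⟨(hbi j hj2 hjk).1.trans (leafX_of_two_le hj2).symm, (hbi j hj2 hjk).2.2.1.le⟩)
  obtain ⟨hlxu, hrxu, hlyu, -⟩ := hintv u hu
  refine ⟨fun hmem => ?_, ?_⟩
  · obtain ⟨w, -, hw⟩ := hT.exists_adj_dist_eq_add_one r' hu
    have hdepth : (T.dist r' u : ℝ) + 1 ≤ h := by
      exact_mod_cast hw ▸ (hmax.2 ⟨w, rfl⟩ : T.dist r' w ≤ h)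
    linarith [hmem.1, (hleafCoord i).2]
  obtain ⟨s, t, hst, hL⟩ := hconsec u hu
  rw [show IsAncestor T r' u (b i) ↔ b i ∈ LeafSet T r' u from
    ⟨fun ha => ⟨(hleaf _).2 ⟨i, rfl⟩, ha⟩, And.right⟩, hlxu, hrxu]
  by_cases hur : u = r'
  · subst hur
    have hmem : b i ∈ LeafSet T u u := ⟨(hleaf _).2 ⟨i, rfl⟩, fun p _ => p.start_mem_support⟩
    exact iff_of_true ⟨csInf_le (toFinite _).bddBelow ⟨_, hmem, rfl⟩,
      le_csSup (toFinite _).bddAbove ⟨_, hmem, rfl⟩⟩ hmem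
  have hs : 2 ≤ (s : ℕ) ∨ s = t := by
    have hbs : b s ∈ LeafSet T r' u := hL ▸ ⟨s, le_rfl, hst, rfl⟩
    have hbt : b t ∈ LeafSet T r' u := hL ▸ ⟨t, hst, le_rfl, rfl⟩
    obtain hs | hs | hs : (s : ℕ) = 0 ∨ (s : ℕ) = 1 ∨ 2 ≤ (s : ℕ) := by omega
    · rw [show s = ⟨0, by omega⟩ from Fin.ext hs] at hbs ⊢
      exact .inr (hinj (leafSet_subsingleton_of_mem hT.connected hpath0 hu hur hbs hbs hbt))
    · rw [show s = ⟨1, by omega⟩ from Fin.ext hs] at hbs ⊢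
      exact .inr (hinj (leafSet_subsingleton_of_mem hT.connected hpath1 hu hur hbs hbs hbt))
    · exact .inl hs
  exact leafX_mem_Icc_csInf_csSup_image_iff hinj (fun j => (hleafCoord j).1) hst hs hL i
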